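/- Let e : (0,∞) → ℝ be differentiable on (0,∞) such that for every θ > 0, e′(θ) > 0 and (1 + e(θ) + θ)·e′(θ) > θ(1 + e′(θ)), and suppose e(θ) → 0 as θ → 0⁺. Then for every θ > 0, 1 + e(θ) > √(1 + θ²); equivalently, the specific enthalpy h(θ) = 1 + e(θ) + θ satisfies h(θ) > √(θ² + 1) + θ. -/

import Mathlib

/-!
Causality gives `(1 + e) e' > θ`, i.e. `(1 + e(θ))² - θ²` is strictly increasing on `(0, ∞)`.
It tends to `1` as `θ → 0⁺`, so `(1 + e(θ))² > 1 + θ²`; and `1 + e > 0` because `e` is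
increasing with limit `0` at `0⁺`.
-/

open Set Filter Topology

theorem StrictMonoOn.lt_of_tendsto_nhdsGT {α β : Type*} [LinearOrder α] [TopologicalSpace α]
    [OrderTopology α] [DenselyOrdered α] [TopologicalSpace β] [Preorder β]
    [ClosedIicTopology β] {f : α → β} {a x : α} {L : β} (hf : StrictMonoOn f (Ioi a))
    (hlim : Tendsto f (𝓝[>] a) (𝓝 L)) (hx : a < x) : L < f x := by
  obtain ⟨y, hay, hyx⟩ := exists_between hx
  have : NeBot (𝓝[>] a) := nhdsGT_neBot_of_exists_gt ⟨x, hx⟩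
  have hLy : L ≤ f y :=
    le_of_tendsto hlim <|
      mem_of_superset (Ioo_mem_nhdsGT hay) fun t ht => (hf ht.1 hay ht.2).le
  exact hLy.trans_lt (hf hay hx hyx)

theorem strictMonoOn_Ioi_of_hasDerivAt_pos {f f' : ℝ → ℝ} {a : ℝ}
    (hf : ∀ x > a, HasDerivAt f (f' x) x) (hf' : ∀ x > a, 0 < f' x) :
    StrictMonoOn f (Ioi a) :=
  strictMonoOn_of_deriv_pos (convex_Ioi a)
    (fun x hx => (hf x hx).continuousAt.continuousWithinAt)
    (fun x hx => by
      rw [interior_Ioi] at hx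
      rw [(hf x hx).deriv]
      exact hf' x hx)

theorem hasDerivAt_sq_one_add_sub_sq {e : ℝ → ℝ} {e' θ : ℝ} (he : HasDerivAt e e' θ) :
    HasDerivAt (fun t => (1 + e t) ^ 2 - t ^ 2) (2 * ((1 + e θ) * e' - θ)) θ := by
  refine (((he.const_add 1).pow 2).sub (hasDerivAt_pow 2 θ)).congr_deriv ?_
  norm_num
  ring

theorem stmt19 (e e' : ℝ → ℝ)
    (hderiv : ∀ θ > (0 : ℝ), HasDerivAt e (e' θ) θ)
    (hpos : ∀ θ > (0 : ℝ), 0 < e' θ)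
    (hcaus : ∀ θ > (0 : ℝ), θ * (1 + e' θ) < (1 + e θ + θ) * e' θ)
    (hlim : Filter.Tendsto e (nhdsWithin 0 (Set.Ioi 0)) (nhds 0)) :
    ∀ θ > (0 : ℝ),
      Real.sqrt (1 + θ ^ 2) < 1 + e θ ∧
        Real.sqrt (θ ^ 2 + 1) + θ < 1 + e θ + θ := by
  intro θ hθ
  have he_pos : 0 < e θ :=
    (strictMonoOn_Ioi_of_hasDerivAt_pos hderiv hpos).lt_of_tendsto_nhdsGT hlim hθ
  have hF_mono : StrictMonoOn (fun t => (1 + e t) ^ 2 - t ^ 2) (Ioi 0) :=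
    strictMonoOn_Ioi_of_hasDerivAt_pos (fun t ht => hasDerivAt_sq_one_add_sub_sq (hderiv t ht))
      (fun t ht => by linarith [hcaus t ht])
  have hF_lim : Tendsto (fun t => (1 + e t) ^ 2 - t ^ 2) (𝓝[>] 0) (𝓝 1) := by
    simpa using ((hlim.const_add 1).pow 2).sub
      ((tendsto_nhdsWithin_of_tendsto_nhds tendsto_id).pow 2)
  have hF_gt : 1 < (1 + e θ) ^ 2 - θ ^ 2 := hF_mono.lt_of_tendsto_nhdsGT hF_lim hθ
  have hsqrt : Real.sqrt (1 + θ ^ 2) < 1 + e θ := (Real.sqrt_lt' (by linarith)).mpr (by linarith)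
  exact ⟨hsqrt, by rw [add_comm (θ ^ 2)]; linarith⟩
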